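/- Let n ≥ 4. Define c(j) := j for 1 ≤ j ≤ n and c(j) := 2n−1−j for n < j ≤ 2n−2. Then the map Φ sending m ∈ {0, 1, …, 2n−2} to e_1 − Σ_{j=1}^{m} α_{c(j)}, and sending the extra element μ to e_1 − (α_1 + α_2 + ⋯ + α_{n−2} + α_n), is a bijection from the set {0, 1, …, 2n−2} ∪ {μ} onto the set {e_k : 1 ≤ k ≤ n} ∪ {−e_k : 1 ≤ k ≤ n} ⊂ ℤ^n, which is the orbit of the fundamental weight Λ_1 = e_1 under the type D_n Weyl group. -/

import Mathlib

/-
The partial sums of `α_{c(1)}, α_{c(2)}, …` telescope: the roots `α_1, …, α_{n-1}` move `e_1`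
along `e_2, …, e_n`, the root `α_n` in column `n` turns `e_n` into `-e_{n-1}`, and the roots
`α_{n-2}, …, α_1` move it on to `-e_1`; the column `μ` lands on `-e_n`. So `Φ` lists every
signed basis vector `sgn(k) e_{|k|}`, `0 < |k| ≤ n`, exactly once.
-/

namespace Stmt3

/-- Standard basis vector `e_k` (1-indexed) of `ℤ^n`. -/
def E (n k : ℕ) : Fin n → ℤ := fun x => if (x : ℕ) + 1 = k then 1 else 0

/-- Type `D_n` simple roots: `α_k = e_k - e_{k+1}` for `1 ≤ k ≤ n-1`
and `α_n = e_{n-1} + e_n`. -/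
def alpha (n k : ℕ) : Fin n → ℤ :=
  if k = n then E n (n - 1) + E n n else E n k - E n (k + 1)

/-- The residue of the `j`-th column of the one-row diagram `(2n-2)`. -/
def c (n j : ℕ) : ℕ := if j ≤ n then j else 2 * n - 1 - j

/-- `Φ`: `some m` (with `0 ≤ m ≤ 2n-2`) encodes the one-row diagram `(m)`,
mapped to `e_1 - ∑_{j=1}^m α_{c(j)}`; `none` encodes the extra element `μ = (1^{n-1})`,
mapped to `e_1 - (α_1 + ⋯ + α_{n-2} + α_n)`. -/
def Phi (n : ℕ) : Option (Fin (2 * n - 1)) → (Fin n → ℤ)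
  | some m => E n 1 - ∑ j ∈ Finset.Icc 1 (m : ℕ), alpha n (c n j)
  | none => E n 1 - (∑ k ∈ Finset.Icc 1 (n - 2), alpha n k + alpha n n)

lemma E_apply (n k : ℕ) (x : Fin n) : E n k x = if (x : ℕ) + 1 = k then 1 else 0 := rfl

lemma alpha_of_ne {n k : ℕ} (h : k ≠ n) : alpha n k = E n k - E n (k + 1) := if_neg h

lemma alpha_self (n : ℕ) : alpha n n = E n (n - 1) + E n n := if_pos rfl

lemma c_of_le {n j : ℕ} (h : j ≤ n) : c n j = j := if_pos h

lemma c_of_lt {n j : ℕ} (h : n < j) : c n j = 2 * n - 1 - j := if_neg (by omega)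

lemma sum_alpha_c (n m : ℕ) (hm : m ≤ 2 * n - 2) :
    ∑ j ∈ Finset.Icc 1 m, alpha n (c n j) =
      if m < n then E n 1 - E n (m + 1) else E n 1 + E n (2 * n - 1 - m) := by
  induction m with
  | zero =>
    rcases n.eq_zero_or_pos with rfl | hn
    · exact Subsingleton.elim _ _
    · simp [hn]
  | succ m ih =>
    rw [Finset.sum_Icc_succ_top (by omega), ih (by omega)]
    rcases lt_trichotomy (m + 1) n with hlt | rfl | hgt
    · rw [c_of_le hlt.le, alpha_of_ne hlt.ne, if_pos (by omega), if_pos hlt]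
      abel
    · rw [c_of_le le_rfl, alpha_self, if_pos (by omega), if_neg (by omega),
        show 2 * (m + 1) - 1 - (m + 1) = m + 1 - 1 by omega]
      abel
    · rw [c_of_lt hgt, alpha_of_ne (by omega), if_neg (by omega), if_neg (by omega),
        show 2 * n - 1 - m = 2 * n - 1 - (m + 1) + 1 by omega]
      abel

def signedBasis (n : ℕ) (k : ℤ) : Fin n → ℤ := k.sign • E n k.natAbs

lemma signedBasis_natCast (n : ℕ) {k : ℕ} (hk : 0 < k) : signedBasis n k = E n k := by
  simp [signedBasis, Int.sign_natCast_of_ne_zero hk.ne']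

lemma signedBasis_neg_natCast (n : ℕ) {k : ℕ} (hk : 0 < k) : signedBasis n (-k) = -E n k := by
  simp [signedBasis, Int.sign_natCast_of_ne_zero hk.ne']

lemma signedBasis_injOn (n : ℕ) : Set.InjOn (signedBasis n) {k | k ≠ 0 ∧ k.natAbs ≤ n} := by
  rintro k ⟨hk0, hkn⟩ l - hkl
  have h := congrFun hkl ⟨k.natAbs - 1, by omega⟩
  simp only [signedBasis, Pi.smul_apply, E_apply, smul_eq_mul,
    if_pos (show k.natAbs - 1 + 1 = k.natAbs by omega)] at h
  split_ifs at h with habs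
  · rw [mul_one, mul_one] at h
    rw [← Int.sign_mul_natAbs k, ← Int.sign_mul_natAbs l, h,
      show k.natAbs = l.natAbs by omega]
  · simp [Int.sign_eq_zero_iff_zero, hk0] at h

lemma signedBasis_bijOn (n : ℕ) :
    Set.BijOn (signedBasis n) {k | k ≠ 0 ∧ k.natAbs ≤ n}
      {v : Fin n → ℤ | ∃ k, 1 ≤ k ∧ k ≤ n ∧ (v = E n k ∨ v = -E n k)} := by
  refine ⟨?_, signedBasis_injOn n, ?_⟩
  · rintro k ⟨hk0, hkn⟩
    obtain ⟨j, rfl | rfl⟩ := Int.eq_nat_or_neg k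
    · exact ⟨j, by omega, by omega, Or.inl (signedBasis_natCast n (by omega))⟩
    · exact ⟨j, by omega, by omega, Or.inr (signedBasis_neg_natCast n (by omega))⟩
  · rintro v ⟨k, hk1, hkn, rfl | rfl⟩
    · exact ⟨k, ⟨by omega, by omega⟩, signedBasis_natCast n hk1⟩
    · exact ⟨-k, ⟨by omega, by omega⟩, signedBasis_neg_natCast n hk1⟩

def signedIndex (n : ℕ) : Option (Fin (2 * n - 1)) → ℤ
  | some m => if (m : ℕ) < n then m + 1 else m + 1 - 2 * n
  | none => -n

lemma signedIndex_bijOn {n : ℕ} (hn : 1 ≤ n) :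
    Set.BijOn (signedIndex n) Set.univ {k | k ≠ 0 ∧ k.natAbs ≤ n} := by
  refine ⟨?_, ?_, ?_⟩
  · rintro (_ | ⟨m, hm⟩) -
    · simp only [signedIndex, Set.mem_ofPred_eq]; omega
    · simp only [signedIndex, Set.mem_ofPred_eq]; split_ifs <;> omega
  · rintro (_ | ⟨a, ha⟩) - (_ | ⟨b, hb⟩) - h <;> simp only [signedIndex] at h
    · rfl
    all_goals split_ifs at h <;> simp only [Option.some.injEq, Fin.mk.injEq, reduceCtorEq] <;> omega
  · rintro k ⟨hk0, hkn⟩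
    rcases lt_trichotomy k (-n) with hlt | rfl | hgt
    · omega
    · exact ⟨none, trivial, rfl⟩
    · rcases lt_or_gt_of_ne hk0 with hneg | hpos
      · refine ⟨some ⟨(k + 2 * n - 1).toNat, by omega⟩, trivial, ?_⟩
        simp only [signedIndex]; split_ifs <;> omega
      · refine ⟨some ⟨k.toNat - 1, by omega⟩, trivial, ?_⟩
        simp only [signedIndex]; split_ifs <;> omega

lemma Phi_eq_signedBasis_comp {n : ℕ} (hn : 2 ≤ n) : Phi n = signedBasis n ∘ signedIndex n := by
  funext x
  rcases x with _ | ⟨m, hm⟩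
  · have hsum : ∑ k ∈ Finset.Icc 1 (n - 2), alpha n k = E n 1 - E n (n - 1) := calc
      _ = ∑ j ∈ Finset.Icc 1 (n - 2), alpha n (c n j) := Finset.sum_congr rfl fun j hj => by
        rw [c_of_le ((Finset.mem_Icc.mp hj).2.trans (Nat.sub_le n 2))]
      _ = E n 1 - E n (n - 1) := by
        rw [sum_alpha_c n (n - 2) (by omega), if_pos (by omega), show n - 2 + 1 = n - 1 by omega]
    rw [Function.comp_apply, signedIndex, signedBasis_neg_natCast n (by omega), Phi, hsum,
      alpha_self]
    abel
  · rw [Function.comp_apply, signedIndex, Phi, sum_alpha_c n m (by omega)]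
    split_ifs with hmn
    · rw [show (m : ℤ) + 1 = ((m + 1 : ℕ) : ℤ) by push_cast; ring,
        signedBasis_natCast n (by omega)]
      abel
    · rw [show (m : ℤ) + 1 - 2 * n = -((2 * n - 1 - m : ℕ) : ℤ) by omega,
        signedBasis_neg_natCast n (by omega)]
      abel

theorem stmt3 (n : ℕ) (hn : 4 ≤ n) :
    Set.BijOn (Phi n) Set.univ
      {v : Fin n → ℤ | ∃ k, 1 ≤ k ∧ k ≤ n ∧ (v = E n k ∨ v = -E n k)} := by
  rw [Phi_eq_signedBasis_comp (by omega)]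
  exact (signedBasis_bijOn n).comp (signedIndex_bijOn (by omega))

end Stmt3
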